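/- arXiv:2409.12920 — 5 statements merged into one kernel-verified Lean document; each statement's English description precedes it below -/
import Mathlib

section
/- Let C be a monoidal category, (A, m, u) an algebra object in C with A left dualizable, and suppose (W, n) is a Frobenius structure on A where W is invertible with inverse V = W^∨. Then A ⊗ V is a right dual of A: the maps e'_A : A ⊗ (A ⊗ V) → 1 defined as e_V ∘ (1_W ⊗ e_A ⊗ 1_V) ∘ (φ ⊗ 1_{A ⊗ V}) and c'_A : 1 → (A ⊗ V) ⊗ A defined as (1_{A ⊗ V} ⊗ φ^{-1}) ∘ (1_A ⊗ c_V ⊗ 1_{A^∨}) ∘ c_A satisfy the triangle identities. In particular A is right dualizable with ^∨A ≅ A ⊗ V. -/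
open CategoryTheory MonoidalCategory

/-- Tensor product of exact pairings. -/
def tensorExactPairing {C : Type*} [Category C] [MonoidalCategory C]
    (X₁ X₂ Y₁ Y₂ : C) [ExactPairing X₁ Y₁] [ExactPairing X₂ Y₂] :
    ExactPairing (X₁ ⊗ X₂) (Y₂ ⊗ Y₁) where
  coevaluation' :=
    η_ X₁ Y₁ ≫ X₁ ◁ (λ_ Y₁).inv ≫ X₁ ◁ (η_ X₂ Y₂ ▷ Y₁) ≫ X₁ ◁ (α_ X₂ Y₂ Y₁).hom ≫
      (α_ X₁ X₂ (Y₂ ⊗ Y₁)).inv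
  evaluation' :=
    (α_ Y₂ Y₁ (X₁ ⊗ X₂)).hom ≫ Y₂ ◁ (α_ Y₁ X₁ X₂).inv ≫ Y₂ ◁ (ε_ X₁ Y₁ ▷ X₂) ≫
      Y₂ ◁ (λ_ X₂).hom ≫ ε_ X₂ Y₂
  evaluation_coevaluation' := by
    calc
      _ = 𝟙 _ ⊗≫ η_ X₁ Y₁ ▷ (X₁ ⊗ X₂) ⊗≫
          X₁ ◁ (η_ X₂ Y₂ ▷ ((Y₁ ⊗ X₁) ⊗ X₂) ≫ (X₂ ⊗ Y₂) ◁ (ε_ X₁ Y₁ ▷ X₂)) ⊗≫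
          (X₁ ⊗ X₂) ◁ ε_ X₂ Y₂ ⊗≫ 𝟙 _ := by
        monoidal
      _ = 𝟙 _ ⊗≫ (η_ X₁ Y₁ ▷ X₁ ⊗≫ X₁ ◁ ε_ X₁ Y₁) ▷ X₂ ⊗≫
          X₁ ◁ (η_ X₂ Y₂ ▷ X₂ ⊗≫ X₂ ◁ ε_ X₂ Y₂) ⊗≫ 𝟙 _ := by
        rw [← whisker_exchange]; monoidal
      _ = (λ_ (X₁ ⊗ X₂)).hom ≫ (ρ_ (X₁ ⊗ X₂)).inv := by
        rw [ExactPairing.evaluation_coevaluation'', ExactPairing.evaluation_coevaluation'']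
        monoidal
  coevaluation_evaluation' := by
    calc
      _ = 𝟙 _ ⊗≫ Y₂ ◁ (Y₁ ◁ η_ X₁ Y₁) ⊗≫
          ((Y₂ ⊗ (Y₁ ⊗ X₁)) ◁ (η_ X₂ Y₂ ▷ Y₁) ≫ (Y₂ ◁ ε_ X₁ Y₁) ▷ ((X₂ ⊗ Y₂) ⊗ Y₁)) ⊗≫
          ε_ X₂ Y₂ ▷ (Y₂ ⊗ Y₁) ⊗≫ 𝟙 _ := by
        monoidal
      _ = 𝟙 _ ⊗≫ Y₂ ◁ (Y₁ ◁ η_ X₁ Y₁ ⊗≫ ε_ X₁ Y₁ ▷ Y₁) ⊗≫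
          (Y₂ ◁ η_ X₂ Y₂ ⊗≫ ε_ X₂ Y₂ ▷ Y₂) ▷ Y₁ ⊗≫ 𝟙 _ := by
        rw [whisker_exchange]; monoidal
      _ = (ρ_ (Y₂ ⊗ Y₁)).hom ≫ (λ_ (Y₂ ⊗ Y₁)).inv := by
        rw [ExactPairing.coevaluation_evaluation'', ExactPairing.coevaluation_evaluation'']
        monoidal

/-- Let `(A, m, u)` be a left-dualizable algebra object with Frobenius structure `(W, n)`
(with `φ` invertible, with two-sided inverse `ψ`), where `W` is invertible with inverse
`V = W^∨`.  Then `A ⊗ V` is a right dual of `A`: the maps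
`e' = e_V ∘ (1_W ⊗ e ⊗ 1_V) ∘ (φ ⊗ 1) : A ⊗ (A ⊗ V) ⟶ 𝟙` and
`c' = (1 ⊗ φ⁻¹) ∘ (1 ⊗ c_V ⊗ 1) ∘ c : 𝟙 ⟶ (A ⊗ V) ⊗ A` satisfy the triangle identities
(here `e_V = cW⁻¹` and `c_V = eW⁻¹`).  In particular `A` is right dualizable with
`^∨A ≅ A ⊗ V`. -/
theorem stmt_4 {C : Type*} [Category C] [MonoidalCategory C]
    (A Ad W V : C) (m : A ⊗ A ⟶ A) (u : 𝟙_ C ⟶ A)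
    (hassoc : (α_ A A A).inv ≫ (m ▷ A) ≫ m = (A ◁ m) ≫ m)
    (hunitl : (u ▷ A) ≫ m = (λ_ A).hom)
    (hunitr : (A ◁ u) ≫ m = (ρ_ A).hom)
    (e : Ad ⊗ A ⟶ 𝟙_ C) (c : 𝟙_ C ⟶ A ⊗ Ad)
    (htri₁ : (λ_ A).inv ≫ (c ▷ A) ≫ (α_ A Ad A).hom ≫ (A ◁ e) ≫ (ρ_ A).hom = 𝟙 A)
    (htri₂ : (ρ_ Ad).inv ≫ (Ad ◁ c) ≫ (α_ Ad A Ad).inv ≫ (e ▷ Ad) ≫ (λ_ Ad).hom = 𝟙 Ad)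
    (eW : V ⊗ W ⟶ 𝟙_ C) (cW : 𝟙_ C ⟶ W ⊗ V)
    (htriW₁ : (λ_ W).inv ≫ (cW ▷ W) ≫ (α_ W V W).hom ≫ (W ◁ eW) ≫ (ρ_ W).hom = 𝟙 W)
    (htriW₂ : (ρ_ V).inv ≫ (V ◁ cW) ≫ (α_ V W V).inv ≫ (eW ▷ V) ≫ (λ_ V).hom = 𝟙 V)
    [IsIso eW] [IsIso cW]
    (n : A ⟶ W) (ψ : W ⊗ Ad ⟶ A)
    (hψ₁ : ((ρ_ A).inv ≫ (A ◁ c) ≫ (α_ A A Ad).inv ≫ ((m ≫ n) ▷ Ad)) ≫ ψ = 𝟙 A)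
    (hψ₂ : ψ ≫ ((ρ_ A).inv ≫ (A ◁ c) ≫ (α_ A A Ad).inv ≫ ((m ≫ n) ▷ Ad)) = 𝟙 (W ⊗ Ad)) :
    let φ : A ⟶ W ⊗ Ad :=
      (ρ_ A).inv ≫ (A ◁ c) ≫ (α_ A A Ad).inv ≫ ((m ≫ n) ▷ Ad)
    let e' : A ⊗ (A ⊗ V) ⟶ 𝟙_ C :=
      (φ ▷ (A ⊗ V)) ≫ (α_ W Ad (A ⊗ V)).hom ≫ (W ◁ (α_ Ad A V).inv) ≫
        (W ◁ (e ▷ V)) ≫ (W ◁ (λ_ V).hom) ≫ inv cW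
    let c' : 𝟙_ C ⟶ (A ⊗ V) ⊗ A :=
      c ≫ (A ◁ (λ_ Ad).inv) ≫ (A ◁ (inv eW ▷ Ad)) ≫ (A ◁ (α_ V W Ad).hom) ≫
        (A ◁ (V ◁ ψ)) ≫ (α_ A V A).inv
    (ρ_ A).inv ≫ (A ◁ c') ≫ (α_ A (A ⊗ V) A).inv ≫ (e' ▷ A) ≫ (λ_ A).hom = 𝟙 A ∧
    (λ_ (A ⊗ V)).inv ≫ (c' ▷ (A ⊗ V)) ≫ (α_ (A ⊗ V) A (A ⊗ V)).hom ≫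
      ((A ⊗ V) ◁ e') ≫ (ρ_ (A ⊗ V)).hom = 𝟙 (A ⊗ V) := by
  intro φ e' c'
  -- the pairing (A, Ad)
  letI pA : ExactPairing A Ad := by
    refine ⟨c, e, ?_, ?_⟩
    · rw [← cancel_epi (ρ_ Ad).inv, ← cancel_mono (λ_ Ad).hom]
      simpa [Category.assoc] using htri₂
    · rw [← cancel_epi (λ_ A).inv, ← cancel_mono (ρ_ A).hom]
      simpa [Category.assoc] using htri₁
  -- the pairing (V, W), with `η = inv eW` and `ε = inv cW`
  letI pV : ExactPairing V W := by
    have h₁ : cW ▷ W ≫ (α_ W V W).hom ≫ W ◁ eW = (λ_ W).hom ≫ (ρ_ W).inv := by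
      rw [← cancel_epi (λ_ W).inv, ← cancel_mono (ρ_ W).hom]
      simpa [Category.assoc] using htriW₁
    have h₂ : V ◁ cW ≫ (α_ V W V).inv ≫ eW ▷ V = (ρ_ V).hom ≫ (λ_ V).inv := by
      rw [← cancel_epi (ρ_ V).inv, ← cancel_mono (λ_ V).hom]
      simpa [Category.assoc] using htriW₂
    refine ⟨inv eW, inv cW, ?_, ?_⟩
    · -- W ◁ inv eW ≫ α.inv ≫ inv cW ▷ W = (ρ_ W).hom ≫ (λ_ W).inv
      have hK : whiskerRightIso (asIso cW) W ≪≫ α_ W V W ≪≫ whiskerLeftIso W (asIso eW)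
          = λ_ W ≪≫ (ρ_ W).symm := Iso.ext (by simpa using h₁)
      have := congrArg Iso.inv hK
      simpa using this
    · -- inv eW ▷ V ≫ α.hom ≫ V ◁ inv cW = (λ_ V).hom ≫ (ρ_ V).inv
      have hK : whiskerLeftIso V (asIso cW) ≪≫ (α_ V W V).symm ≪≫ whiskerRightIso (asIso eW) V
          = ρ_ V ≪≫ (λ_ V).symm := Iso.ext (by simpa using h₂)
      have := congrArg Iso.inv hK
      simpa using this
  letI pT : ExactPairing (A ⊗ V) (W ⊗ Ad) := tensorExactPairing A V Ad W
  letI P : ExactPairing (A ⊗ V) A :=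
    exactPairingCongrRight (Y' := W ⊗ Ad) ⟨φ, ψ, hψ₁, hψ₂⟩
  have hev : e' = @ExactPairing.evaluation _ _ _ (A ⊗ V) A P := rfl
  have hco : c' = @ExactPairing.coevaluation _ _ _ (A ⊗ V) A P := by
    show c ≫ (A ◁ (λ_ Ad).inv) ≫ (A ◁ (inv eW ▷ Ad)) ≫ (A ◁ (α_ V W Ad).hom) ≫
        (A ◁ (V ◁ ψ)) ≫ (α_ A V A).inv
      = (c ≫ A ◁ (λ_ Ad).inv ≫ A ◁ (inv eW ▷ Ad) ≫ A ◁ (α_ V W Ad).hom ≫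
          (α_ A V (W ⊗ Ad)).inv) ≫ (A ⊗ V) ◁ ψ
    simp only [Category.assoc]
    congr 4
    rw [associator_inv_naturality_right]
  constructor
  · rw [hco, hev, ExactPairing.coevaluation_evaluation_assoc]
    simp
  · rw [hco, hev, ExactPairing.evaluation_coevaluation_assoc]
    simp
end

section
/- Let C be a monoidal category, (A, m, u) an algebra object in C with A left dualizable, and suppose (W, n) is a Frobenius structure on A where W is invertible with inverse V = W^∨. Equip A with the right dual ^∨A = A ⊗ V constructed from φ (with evaluation e'_A = e_V ∘ (1_W ⊗ e_A ⊗ 1_V) ∘ (φ ⊗ 1_{A ⊗ V}) and coevaluation c'_A = (1_{A ⊗ V} ⊗ φ^{-1}) ∘ (1_A ⊗ c_V ⊗ 1_{A^∨}) ∘ c_A). Then the morphism φ' : A → ^∨A ⊗ W defined as (1_{^∨A} ⊗ (n ∘ m)) ∘ (c'_A ⊗ 1_A) equals 1_A ⊗ c_V : A → A ⊗ V ⊗ W; in particular, since c_V is invertible, φ' is invertible. -/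
open CategoryTheory MonoidalCategory

/-- Let `(A, m, u)` be a left-dualizable algebra object with Frobenius structure `(W, n)`
(with `φ` invertible, with two-sided inverse `ψ`), where `W` is invertible with inverse
`V = W^∨`.  Equip `A` with the right dual `^∨A = A ⊗ V` with evaluation `e'` and
coevaluation `c'` constructed from `φ`.  Then
`φ' := (1 ⊗ (n ∘ m)) ∘ (c' ⊗ 1) : A ⟶ (A ⊗ V) ⊗ W` equals
`1_A ⊗ c_V : A ⟶ A ⊗ V ⊗ W` (where `c_V = eW⁻¹`); in particular `φ'` is invertible. -/
theorem stmt_5 {C : Type*} [Category C] [MonoidalCategory C]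
    (A Ad W V : C) (m : A ⊗ A ⟶ A) (u : 𝟙_ C ⟶ A)
    (hassoc : (α_ A A A).inv ≫ (m ▷ A) ≫ m = (A ◁ m) ≫ m)
    (hunitl : (u ▷ A) ≫ m = (λ_ A).hom)
    (hunitr : (A ◁ u) ≫ m = (ρ_ A).hom)
    (e : Ad ⊗ A ⟶ 𝟙_ C) (c : 𝟙_ C ⟶ A ⊗ Ad)
    (htri₁ : (λ_ A).inv ≫ (c ▷ A) ≫ (α_ A Ad A).hom ≫ (A ◁ e) ≫ (ρ_ A).hom = 𝟙 A)
    (htri₂ : (ρ_ Ad).inv ≫ (Ad ◁ c) ≫ (α_ Ad A Ad).inv ≫ (e ▷ Ad) ≫ (λ_ Ad).hom = 𝟙 Ad)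
    (eW : V ⊗ W ⟶ 𝟙_ C) (cW : 𝟙_ C ⟶ W ⊗ V)
    (htriW₁ : (λ_ W).inv ≫ (cW ▷ W) ≫ (α_ W V W).hom ≫ (W ◁ eW) ≫ (ρ_ W).hom = 𝟙 W)
    (htriW₂ : (ρ_ V).inv ≫ (V ◁ cW) ≫ (α_ V W V).inv ≫ (eW ▷ V) ≫ (λ_ V).hom = 𝟙 V)
    [IsIso eW] [IsIso cW]
    (n : A ⟶ W) (ψ : W ⊗ Ad ⟶ A)
    (hψ₁ : ((ρ_ A).inv ≫ (A ◁ c) ≫ (α_ A A Ad).inv ≫ ((m ≫ n) ▷ Ad)) ≫ ψ = 𝟙 A)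
    (hψ₂ : ψ ≫ ((ρ_ A).inv ≫ (A ◁ c) ≫ (α_ A A Ad).inv ≫ ((m ≫ n) ▷ Ad)) = 𝟙 (W ⊗ Ad)) :
    let c' : 𝟙_ C ⟶ (A ⊗ V) ⊗ A :=
      c ≫ (A ◁ (λ_ Ad).inv) ≫ (A ◁ (inv eW ▷ Ad)) ≫ (A ◁ (α_ V W Ad).hom) ≫
        (A ◁ (V ◁ ψ)) ≫ (α_ A V A).inv
    let φ' : A ⟶ (A ⊗ V) ⊗ W :=
      (λ_ A).inv ≫ (c' ▷ A) ≫ (α_ (A ⊗ V) A A).hom ≫ ((A ⊗ V) ◁ (m ≫ n))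
    φ' = (ρ_ A).inv ≫ (A ◁ inv eW) ≫ (α_ A V W).inv ∧ IsIso φ' := by
  intro c' φ'
  -- Key lemma: `ψ` followed by `n ∘ m` is the evaluation-style pairing.
  have hX : (((ρ_ A).inv ≫ (A ◁ c) ≫ (α_ A A Ad).inv ≫ ((m ≫ n) ▷ Ad)) ▷ A)
      ≫ (α_ W Ad A).hom ≫ (W ◁ e) ≫ (ρ_ W).hom
      = (A ◁ ((λ_ A).inv ≫ (c ▷ A) ≫ (α_ A Ad A).hom ≫ (A ◁ e) ≫ (ρ_ A).hom)) ≫ m ≫ n := by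
    monoidal
    simp [whisker_exchange]
    simp only [associator_naturality_left_assoc, associator_naturality_left,
      ← whisker_exchange_assoc, ← whisker_exchange, Category.assoc]
    simp [rightUnitor_naturality]
  rw [htri₁, MonoidalCategory.whiskerLeft_id, Category.id_comp] at hX
  have hK : (ψ ▷ A) ≫ m ≫ n = (α_ W Ad A).hom ≫ (W ◁ e) ≫ (ρ_ W).hom := by
    rw [← hX, ← Category.assoc, ← comp_whiskerRight, hψ₂, id_whiskerRight, Category.id_comp]
  have h1 : φ' = (λ_ A).inv ≫ (c ▷ A) ≫ (α_ A Ad A).hom ≫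
      (A ◁ ((λ_ (Ad ⊗ A)).inv ≫ (inv eW ▷ (Ad ⊗ A)) ≫ (α_ V W (Ad ⊗ A)).hom ≫
        (V ◁ (α_ W Ad A).inv) ≫ (V ◁ ((ψ ▷ A) ≫ m ≫ n)))) ≫ (α_ A V W).inv := by
    show (λ_ A).inv ≫
      ((c ≫ (A ◁ (λ_ Ad).inv) ≫ (A ◁ (inv eW ▷ Ad)) ≫ (A ◁ (α_ V W Ad).hom) ≫
        (A ◁ (V ◁ ψ)) ≫ (α_ A V A).inv) ▷ A) ≫
      (α_ (A ⊗ V) A A).hom ≫ ((A ⊗ V) ◁ (m ≫ n)) = _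
    monoidal
  rw [hK] at h1
  have hw : (inv eW ▷ (Ad ⊗ A)) ≫ ((V ⊗ W) ◁ e) = (𝟙_ C ◁ e) ≫ (inv eW ▷ 𝟙_ C) :=
    (whisker_exchange (inv eW) e).symm
  have h2 : (λ_ A).inv ≫ (c ▷ A) ≫ (α_ A Ad A).hom ≫
      (A ◁ ((λ_ (Ad ⊗ A)).inv ≫ (inv eW ▷ (Ad ⊗ A)) ≫ (α_ V W (Ad ⊗ A)).hom ≫
        (V ◁ (α_ W Ad A).inv) ≫ (V ◁ ((α_ W Ad A).hom ≫ (W ◁ e) ≫ (ρ_ W).hom)))) ≫ (α_ A V W).inv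
      = ((λ_ A).inv ≫ (c ▷ A) ≫ (α_ A Ad A).hom ≫ (A ◁ e) ≫ (ρ_ A).hom) ≫
        ((ρ_ A).inv ≫ (A ◁ inv eW) ≫ (α_ A V W).inv) := by
    calc (λ_ A).inv ≫ (c ▷ A) ≫ (α_ A Ad A).hom ≫
        (A ◁ ((λ_ (Ad ⊗ A)).inv ≫ (inv eW ▷ (Ad ⊗ A)) ≫ (α_ V W (Ad ⊗ A)).hom ≫
          (V ◁ (α_ W Ad A).inv) ≫ (V ◁ ((α_ W Ad A).hom ≫ (W ◁ e) ≫ (ρ_ W).hom)))) ≫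
          (α_ A V W).inv
        = (λ_ A).inv ≫ (c ▷ A) ≫ (α_ A Ad A).hom ≫
          (A ◁ ((λ_ (Ad ⊗ A)).inv ≫ ((inv eW ▷ (Ad ⊗ A)) ≫ ((V ⊗ W) ◁ e)) ≫
            (ρ_ (V ⊗ W)).hom)) ≫ (α_ A V W).inv := by monoidal
      _ = (λ_ A).inv ≫ (c ▷ A) ≫ (α_ A Ad A).hom ≫
          (A ◁ ((λ_ (Ad ⊗ A)).inv ≫ ((𝟙_ C ◁ e) ≫ (inv eW ▷ 𝟙_ C)) ≫
            (ρ_ (V ⊗ W)).hom)) ≫ (α_ A V W).inv := by rw [hw]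
      _ = ((λ_ A).inv ≫ (c ▷ A) ≫ (α_ A Ad A).hom ≫ (A ◁ e) ≫ (ρ_ A).hom) ≫
          ((ρ_ A).inv ≫ (A ◁ inv eW) ≫ (α_ A V W).inv) := by monoidal
  rw [h2, htri₁, Category.id_comp] at h1
  exact ⟨h1, by rw [h1]; infer_instance⟩
end

section
/- Let C be a monoidal category, (A, m, u) an algebra object in C, W an invertible object with inverse V = W^∨, and n : A → W a morphism. Then the following are equivalent: (i) A is left dualizable and the map φ := ((n ∘ m) ⊗ 1_{A^∨}) ∘ (1_A ⊗ c_A) : A → W ⊗ A^∨ is invertible; (ii) A is right dualizable and the map φ' := (1_{^∨A} ⊗ (n ∘ m)) ∘ (c^r_A ⊗ 1_A) : A → ^∨A ⊗ W is invertible. Moreover, if these equivalent conditions hold then A^∨ ≅ V ⊗ A and ^∨A ≅ A ⊗ V. -/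
open CategoryTheory MonoidalCategory

section Aux

variable {C : Type*} [Category C] [MonoidalCategory C]

def myMkPairing (X Y : C) (e : Y ⊗ X ⟶ 𝟙_ C) (c : 𝟙_ C ⟶ X ⊗ Y)
    (h1 : (λ_ X).inv ≫ (c ▷ X) ≫ (α_ X Y X).hom ≫ (X ◁ e) ≫ (ρ_ X).hom = 𝟙 X)
    (h2 : (ρ_ Y).inv ≫ (Y ◁ c) ≫ (α_ Y X Y).inv ≫ (e ▷ Y) ≫ (λ_ Y).hom = 𝟙 Y) :
    ExactPairing X Y where
  coevaluation' := c
  evaluation' := e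
  coevaluation_evaluation' := by
    rw [← cancel_epi (ρ_ Y).inv, ← cancel_mono (λ_ Y).hom]
    simpa using h2
  evaluation_coevaluation' := by
    rw [← cancel_epi (λ_ X).inv, ← cancel_mono (ρ_ X).hom]
    simpa using h1

lemma myTri1 (X Y : C) [ExactPairing X Y] :
    (λ_ X).inv ≫ (η_ X Y ▷ X) ≫ (α_ X Y X).hom ≫ (X ◁ ε_ X Y) ≫ (ρ_ X).hom = 𝟙 X := by
  rw [← cancel_epi (λ_ X).hom, ← cancel_mono (ρ_ X).inv]
  simpa using (ExactPairing.evaluation_coevaluation (X := X) (Y := Y)).symm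

lemma myTri2 (X Y : C) [ExactPairing X Y] :
    (ρ_ Y).inv ≫ (Y ◁ η_ X Y) ≫ (α_ Y X Y).inv ≫ (ε_ X Y ▷ Y) ≫ (λ_ Y).hom = 𝟙 Y := by
  rw [← cancel_epi (ρ_ Y).hom, ← cancel_mono (λ_ Y).inv]
  simpa using (ExactPairing.coevaluation_evaluation (X := X) (Y := Y)).symm

noncomputable def myInvPairing (X Y : C) [ExactPairing X Y] [IsIso (η_ X Y)] [IsIso (ε_ X Y)] :
    ExactPairing Y X where
  coevaluation' := inv (ε_ X Y)
  evaluation' := inv (η_ X Y)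
  coevaluation_evaluation' := by
    have h := ExactPairing.evaluation_coevaluation (X := X) (Y := Y)
    rw [← cancel_epi ((λ_ X).hom ≫ (ρ_ X).inv)]
    simp [← reassoc_of% h]
  evaluation_coevaluation' := by
    have h := ExactPairing.coevaluation_evaluation (X := X) (Y := Y)
    rw [← cancel_epi ((ρ_ Y).hom ≫ (λ_ Y).inv)]
    simp [← reassoc_of% h]

noncomputable def myTensorPairing (X₁ Y₁ X₂ Y₂ : C) [ExactPairing X₁ Y₁] [ExactPairing X₂ Y₂] :
    ExactPairing (X₁ ⊗ X₂) (Y₂ ⊗ Y₁) where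
  coevaluation' := η_ X₁ Y₁ ⊗≫ X₁ ◁ η_ X₂ Y₂ ▷ Y₁ ⊗≫ 𝟙 ((X₁ ⊗ X₂) ⊗ (Y₂ ⊗ Y₁))
  evaluation' := 𝟙 ((Y₂ ⊗ Y₁) ⊗ (X₁ ⊗ X₂)) ⊗≫ Y₂ ◁ ε_ X₁ Y₁ ▷ X₂ ⊗≫ ε_ X₂ Y₂
  coevaluation_evaluation' := by
    trans (𝟙 ((Y₂ ⊗ Y₁) ⊗ 𝟙_ C) ⊗≫ (Y₂ ⊗ Y₁) ◁ η_ X₁ Y₁ ⊗≫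
      ((Y₂ ⊗ (Y₁ ⊗ X₁)) ◁ (η_ X₂ Y₂ ▷ Y₁) ≫ (Y₂ ◁ ε_ X₁ Y₁) ▷ ((X₂ ⊗ Y₂) ⊗ Y₁)) ⊗≫
      ε_ X₂ Y₂ ▷ (Y₂ ⊗ Y₁) ⊗≫ 𝟙 _)
    · monoidal
    rw [whisker_exchange]
    trans (𝟙 ((Y₂ ⊗ Y₁) ⊗ 𝟙_ C) ⊗≫ Y₂ ◁ (Y₁ ◁ η_ X₁ Y₁ ⊗≫ ε_ X₁ Y₁ ▷ Y₁) ⊗≫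
      (Y₂ ◁ η_ X₂ Y₂) ▷ Y₁ ⊗≫ ε_ X₂ Y₂ ▷ (Y₂ ⊗ Y₁) ⊗≫ 𝟙 _)
    · monoidal
    trans (𝟙 ((Y₂ ⊗ Y₁) ⊗ 𝟙_ C) ⊗≫ Y₂ ◁ (Y₁ ◁ η_ X₁ Y₁ ⊗≫ ε_ X₁ Y₁ ▷ Y₁) ⊗≫
      (Y₂ ◁ η_ X₂ Y₂ ⊗≫ ε_ X₂ Y₂ ▷ Y₂) ▷ Y₁ ⊗≫ 𝟙 _)
    · monoidal
    rw [ExactPairing.coevaluation_evaluation'', ExactPairing.coevaluation_evaluation'']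
    monoidal
  evaluation_coevaluation' := by
    trans (𝟙 (𝟙_ C ⊗ (X₁ ⊗ X₂)) ⊗≫ η_ X₁ Y₁ ▷ (X₁ ⊗ X₂) ⊗≫
      ((X₁ ◁ η_ X₂ Y₂) ▷ ((Y₁ ⊗ X₁) ⊗ X₂) ≫ (X₁ ⊗ (X₂ ⊗ Y₂)) ◁ (ε_ X₁ Y₁ ▷ X₂)) ⊗≫
      (X₁ ⊗ X₂) ◁ ε_ X₂ Y₂ ⊗≫ 𝟙 _)
    · monoidal
    rw [← whisker_exchange]
    trans (𝟙 (𝟙_ C ⊗ (X₁ ⊗ X₂)) ⊗≫ (η_ X₁ Y₁ ▷ X₁ ⊗≫ X₁ ◁ ε_ X₁ Y₁) ▷ X₂ ⊗≫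
      X₁ ◁ (η_ X₂ Y₂ ▷ X₂ ⊗≫ X₂ ◁ ε_ X₂ Y₂) ⊗≫ 𝟙 _)
    · monoidal
    rw [ExactPairing.evaluation_coevaluation'', ExactPairing.evaluation_coevaluation'']
    monoidal

section Forward

variable {A W V Ad : C} (p : A ⊗ A ⟶ W)
  (eW : V ⊗ W ⟶ 𝟙_ C) (cW : 𝟙_ C ⟶ W ⊗ V)
  (e : Ad ⊗ A ⟶ 𝟙_ C) (c : 𝟙_ C ⟶ A ⊗ Ad)

theorem my_key
    (h1 : (λ_ A).inv ≫ (c ▷ A) ≫ (α_ A Ad A).hom ≫ (A ◁ e) ≫ (ρ_ A).hom = 𝟙 A) :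
    (((ρ_ A).inv ≫ (A ◁ c) ≫ (α_ A A Ad).inv ≫ (p ▷ Ad)) ▷ A) ≫ (α_ W Ad A).hom ≫
      (W ◁ e) ≫ (ρ_ W).hom = p := by
  trans (𝟙 (A ⊗ A) ⊗≫ A ◁ (c ▷ A) ⊗≫ (p ▷ (Ad ⊗ A) ≫ W ◁ e) ⊗≫ 𝟙 (W ⊗ 𝟙_ C) ⊗≫ 𝟙 W)
  · monoidal
  rw [← whisker_exchange]
  trans (𝟙 (A ⊗ A) ⊗≫
      A ◁ ((λ_ A).inv ≫ (c ▷ A) ≫ (α_ A Ad A).hom ≫ (A ◁ e) ≫ (ρ_ A).hom) ⊗≫ p)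
  · monoidal
  rw [h1]
  monoidal

theorem fwd (htriW₁ : (λ_ W).inv ≫ (cW ▷ W) ≫ (α_ W V W).hom ≫ (W ◁ eW) ≫ (ρ_ W).hom = 𝟙 W)
    (htriW₂ : (ρ_ V).inv ≫ (V ◁ cW) ≫ (α_ V W V).inv ≫ (eW ▷ V) ≫ (λ_ V).hom = 𝟙 V)
    [IsIso eW] [IsIso cW]
    (h1 : (λ_ A).inv ≫ (c ▷ A) ≫ (α_ A Ad A).hom ≫ (A ◁ e) ≫ (ρ_ A).hom = 𝟙 A)
    (h2 : (ρ_ Ad).inv ≫ (Ad ◁ c) ≫ (α_ Ad A Ad).inv ≫ (e ▷ Ad) ≫ (λ_ Ad).hom = 𝟙 Ad)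
    (hφ : IsIso ((ρ_ A).inv ≫ (A ◁ c) ≫ (α_ A A Ad).inv ≫ (p ▷ Ad))) :
    ∃ (Av : C) (e' : A ⊗ Av ⟶ 𝟙_ C) (c' : 𝟙_ C ⟶ Av ⊗ A),
      (ρ_ A).inv ≫ (A ◁ c') ≫ (α_ A Av A).inv ≫ (e' ▷ A) ≫ (λ_ A).hom = 𝟙 A ∧
      (λ_ Av).inv ≫ (c' ▷ Av) ≫ (α_ Av A Av).hom ≫ (Av ◁ e') ≫ (ρ_ Av).hom = 𝟙 Av ∧
      IsIso ((λ_ A).inv ≫ (c' ▷ A) ≫ (α_ Av A A).hom ≫ (Av ◁ p)) := by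
  letI pA : ExactPairing A Ad := myMkPairing A Ad e c h1 h2
  letI pW : ExactPairing W V := myMkPairing W V eW cW htriW₁ htriW₂
  haveI : IsIso (η_ W V) := ‹IsIso cW›
  haveI : IsIso (ε_ W V) := ‹IsIso eW›
  letI pVW : ExactPairing V W := myInvPairing W V
  letI pT : ExactPairing (A ⊗ V) (W ⊗ Ad) := myTensorPairing A Ad V W
  set φ : A ⟶ W ⊗ Ad := (ρ_ A).inv ≫ (A ◁ c) ≫ (α_ A A Ad).inv ≫ (p ▷ Ad) with hφdef
  letI pF : ExactPairing (A ⊗ V) A := exactPairingCongrRight (asIso φ)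
  refine ⟨A ⊗ V, ε_ (A ⊗ V) A, η_ (A ⊗ V) A, myTri2 _ _, myTri1 _ _, ?_⟩
  have hinv : (inv φ ▷ A) ≫ p = (α_ W Ad A).hom ≫ (W ◁ e) ≫ (ρ_ W).hom := by
    rw [← my_key p e c h1, ← hφdef]
    simp
  have hc' : η_ (A ⊗ V) A =
      (c ⊗≫ A ◁ inv eW ▷ Ad ⊗≫ 𝟙 ((A ⊗ V) ⊗ (W ⊗ Ad))) ≫ ((A ⊗ V) ◁ inv φ) := rfl
  have hcan : (λ_ A).inv ≫ (η_ (A ⊗ V) A ▷ A) ≫ (α_ (A ⊗ V) A A).hom ≫ ((A ⊗ V) ◁ p) =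
      (ρ_ A).inv ≫ (A ◁ inv eW) ≫ (α_ A V W).inv := by
    rw [hc', comp_whiskerRight, Category.assoc, associator_naturality_middle_assoc,
      ← MonoidalCategory.whiskerLeft_comp, hinv]
    trans (𝟙 A ⊗≫ c ▷ A ⊗≫ ((A ◁ inv eW) ▷ (Ad ⊗ A) ≫ (A ⊗ (V ⊗ W)) ◁ e) ⊗≫
      𝟙 ((A ⊗ V) ⊗ W))
    · monoidal
    rw [← whisker_exchange]
    trans (𝟙 A ⊗≫ ((λ_ A).inv ≫ (c ▷ A) ≫ (α_ A Ad A).hom ≫ (A ◁ e) ≫ (ρ_ A).hom) ⊗≫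
      A ◁ inv eW ⊗≫ 𝟙 ((A ⊗ V) ⊗ W))
    · monoidal
    rw [h1]
    monoidal
  rw [hcan]
  infer_instance

end Forward

section Backward

variable {A W V Av : C} (p : A ⊗ A ⟶ W)
  (eW : V ⊗ W ⟶ 𝟙_ C) (cW : 𝟙_ C ⟶ W ⊗ V)
  (e' : A ⊗ Av ⟶ 𝟙_ C) (c' : 𝟙_ C ⟶ Av ⊗ A)

theorem my_key'
    (h1 : (ρ_ A).inv ≫ (A ◁ c') ≫ (α_ A Av A).inv ≫ (e' ▷ A) ≫ (λ_ A).hom = 𝟙 A) :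
    (A ◁ ((λ_ A).inv ≫ (c' ▷ A) ≫ (α_ Av A A).hom ≫ (Av ◁ p))) ≫ (α_ A Av W).inv ≫
      (e' ▷ W) ≫ (λ_ W).hom = p := by
  trans (𝟙 (A ⊗ A) ⊗≫ A ◁ c' ▷ A ⊗≫ ((A ⊗ Av) ◁ p ≫ e' ▷ W) ⊗≫ 𝟙 W)
  · monoidal
  rw [whisker_exchange]
  trans (𝟙 (A ⊗ A) ⊗≫
      ((ρ_ A).inv ≫ (A ◁ c') ≫ (α_ A Av A).inv ≫ (e' ▷ A) ≫ (λ_ A).hom) ▷ A ⊗≫ p)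
  · monoidal
  rw [h1]
  monoidal

theorem bwd (htriW₁ : (λ_ W).inv ≫ (cW ▷ W) ≫ (α_ W V W).hom ≫ (W ◁ eW) ≫ (ρ_ W).hom = 𝟙 W)
    (htriW₂ : (ρ_ V).inv ≫ (V ◁ cW) ≫ (α_ V W V).inv ≫ (eW ▷ V) ≫ (λ_ V).hom = 𝟙 V)
    [IsIso eW] [IsIso cW]
    (h1 : (ρ_ A).inv ≫ (A ◁ c') ≫ (α_ A Av A).inv ≫ (e' ▷ A) ≫ (λ_ A).hom = 𝟙 A)
    (h2 : (λ_ Av).inv ≫ (c' ▷ Av) ≫ (α_ Av A Av).hom ≫ (Av ◁ e') ≫ (ρ_ Av).hom = 𝟙 Av)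
    (hφ : IsIso ((λ_ A).inv ≫ (c' ▷ A) ≫ (α_ Av A A).hom ≫ (Av ◁ p))) :
    ∃ (Ad : C) (e : Ad ⊗ A ⟶ 𝟙_ C) (c : 𝟙_ C ⟶ A ⊗ Ad),
      (λ_ A).inv ≫ (c ▷ A) ≫ (α_ A Ad A).hom ≫ (A ◁ e) ≫ (ρ_ A).hom = 𝟙 A ∧
      (ρ_ Ad).inv ≫ (Ad ◁ c) ≫ (α_ Ad A Ad).inv ≫ (e ▷ Ad) ≫ (λ_ Ad).hom = 𝟙 Ad ∧
      IsIso ((ρ_ A).inv ≫ (A ◁ c) ≫ (α_ A A Ad).inv ≫ (p ▷ Ad)) := by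
  letI pAv : ExactPairing Av A := myMkPairing Av A e' c' h2 h1
  letI pW : ExactPairing W V := myMkPairing W V eW cW htriW₁ htriW₂
  haveI : IsIso (η_ W V) := ‹IsIso cW›
  haveI : IsIso (ε_ W V) := ‹IsIso eW›
  letI pVW : ExactPairing V W := myInvPairing W V
  letI pT : ExactPairing (Av ⊗ W) (V ⊗ A) := myTensorPairing Av A W V
  set φ : A ⟶ Av ⊗ W := (λ_ A).inv ≫ (c' ▷ A) ≫ (α_ Av A A).hom ≫ (Av ◁ p) with hφdef
  letI pB : ExactPairing A (V ⊗ A) := exactPairingCongrLeft (asIso φ)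
  refine ⟨V ⊗ A, ε_ A (V ⊗ A), η_ A (V ⊗ A), myTri1 _ _, myTri2 _ _, ?_⟩
  have hinv : (A ◁ inv φ) ≫ p = (α_ A Av W).inv ≫ (e' ▷ W) ≫ (λ_ W).hom := by
    rw [← my_key' p e' c' h1, ← hφdef]
    simp
  have hc : η_ A (V ⊗ A) =
      (c' ⊗≫ Av ◁ cW ▷ A ⊗≫ 𝟙 ((Av ⊗ W) ⊗ (V ⊗ A))) ≫ (inv φ ▷ (V ⊗ A)) := rfl
  have hcan : (ρ_ A).inv ≫ (A ◁ η_ A (V ⊗ A)) ≫ (α_ A A (V ⊗ A)).inv ≫ (p ▷ (V ⊗ A)) =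
      (λ_ A).inv ≫ (cW ▷ A) ≫ (α_ W V A).hom := by
    rw [hc, MonoidalCategory.whiskerLeft_comp, Category.assoc,
      associator_inv_naturality_middle_assoc, ← comp_whiskerRight, hinv]
    trans (𝟙 A ⊗≫ A ◁ c' ⊗≫ ((A ⊗ Av) ◁ (cW ▷ A) ≫ e' ▷ ((W ⊗ V) ⊗ A)) ⊗≫
      𝟙 (W ⊗ (V ⊗ A)))
    · monoidal
    rw [whisker_exchange]
    trans (𝟙 A ⊗≫ ((ρ_ A).inv ≫ (A ◁ c') ≫ (α_ A Av A).inv ≫ (e' ▷ A) ≫ (λ_ A).hom) ⊗≫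
      cW ▷ A ⊗≫ 𝟙 (W ⊗ (V ⊗ A)))
    · monoidal
    rw [h1]
    monoidal
  rw [hcan]
  infer_instance

end Backward

end Aux

/-- Let `(A, m, u)` be an algebra object in a monoidal category `C`, `W` an invertible
object with inverse `V = W^∨`, and `n : A ⟶ W` a morphism.  Then the following are
equivalent:
(i) `A` is left dualizable and `φ := ((n ∘ m) ⊗ 1) ∘ (1 ⊗ c_A) : A ⟶ W ⊗ A^∨` is invertible;
(ii) `A` is right dualizable and `φ' := (1 ⊗ (n ∘ m)) ∘ (c^r_A ⊗ 1) : A ⟶ ^∨A ⊗ W` is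
invertible.
Moreover, if these hold then `A^∨ ≅ V ⊗ A` and `^∨A ≅ A ⊗ V`. -/
theorem stmt_6 {C : Type*} [Category C] [MonoidalCategory C]
    (A W V : C) (m : A ⊗ A ⟶ A) (u : 𝟙_ C ⟶ A)
    (hassoc : (α_ A A A).inv ≫ (m ▷ A) ≫ m = (A ◁ m) ≫ m)
    (hunitl : (u ▷ A) ≫ m = (λ_ A).hom)
    (hunitr : (A ◁ u) ≫ m = (ρ_ A).hom)
    (eW : V ⊗ W ⟶ 𝟙_ C) (cW : 𝟙_ C ⟶ W ⊗ V)
    (htriW₁ : (λ_ W).inv ≫ (cW ▷ W) ≫ (α_ W V W).hom ≫ (W ◁ eW) ≫ (ρ_ W).hom = 𝟙 W)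
    (htriW₂ : (ρ_ V).inv ≫ (V ◁ cW) ≫ (α_ V W V).inv ≫ (eW ▷ V) ≫ (λ_ V).hom = 𝟙 V)
    [IsIso eW] [IsIso cW]
    (n : A ⟶ W) :
    ((∃ (Ad : C) (e : Ad ⊗ A ⟶ 𝟙_ C) (c : 𝟙_ C ⟶ A ⊗ Ad),
        (λ_ A).inv ≫ (c ▷ A) ≫ (α_ A Ad A).hom ≫ (A ◁ e) ≫ (ρ_ A).hom = 𝟙 A ∧
        (ρ_ Ad).inv ≫ (Ad ◁ c) ≫ (α_ Ad A Ad).inv ≫ (e ▷ Ad) ≫ (λ_ Ad).hom = 𝟙 Ad ∧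
        IsIso ((ρ_ A).inv ≫ (A ◁ c) ≫ (α_ A A Ad).inv ≫ ((m ≫ n) ▷ Ad))) ↔
      (∃ (Av : C) (e' : A ⊗ Av ⟶ 𝟙_ C) (c' : 𝟙_ C ⟶ Av ⊗ A),
        (ρ_ A).inv ≫ (A ◁ c') ≫ (α_ A Av A).inv ≫ (e' ▷ A) ≫ (λ_ A).hom = 𝟙 A ∧
        (λ_ Av).inv ≫ (c' ▷ Av) ≫ (α_ Av A Av).hom ≫ (Av ◁ e') ≫ (ρ_ Av).hom = 𝟙 Av ∧
        IsIso ((λ_ A).inv ≫ (c' ▷ A) ≫ (α_ Av A A).hom ≫ (Av ◁ (m ≫ n))))) ∧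
    (∀ (Ad : C) (e : Ad ⊗ A ⟶ 𝟙_ C) (c : 𝟙_ C ⟶ A ⊗ Ad),
      (λ_ A).inv ≫ (c ▷ A) ≫ (α_ A Ad A).hom ≫ (A ◁ e) ≫ (ρ_ A).hom = 𝟙 A →
      (ρ_ Ad).inv ≫ (Ad ◁ c) ≫ (α_ Ad A Ad).inv ≫ (e ▷ Ad) ≫ (λ_ Ad).hom = 𝟙 Ad →
      IsIso ((ρ_ A).inv ≫ (A ◁ c) ≫ (α_ A A Ad).inv ≫ ((m ≫ n) ▷ Ad)) →
      Nonempty (Ad ≅ V ⊗ A)) ∧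
    (∀ (Av : C) (e' : A ⊗ Av ⟶ 𝟙_ C) (c' : 𝟙_ C ⟶ Av ⊗ A),
      (ρ_ A).inv ≫ (A ◁ c') ≫ (α_ A Av A).inv ≫ (e' ▷ A) ≫ (λ_ A).hom = 𝟙 A →
      (λ_ Av).inv ≫ (c' ▷ Av) ≫ (α_ Av A Av).hom ≫ (Av ◁ e') ≫ (ρ_ Av).hom = 𝟙 Av →
      IsIso ((λ_ A).inv ≫ (c' ▷ A) ≫ (α_ Av A A).hom ≫ (Av ◁ (m ≫ n))) →
      Nonempty (Av ≅ A ⊗ V)) := by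
  refine ⟨⟨?_, ?_⟩, ?_, ?_⟩
  · rintro ⟨Ad, e, c, h1, h2, hφ⟩
    exact fwd (m ≫ n) eW cW e c htriW₁ htriW₂ h1 h2 hφ
  · rintro ⟨Av, e', c', h1, h2, hφ⟩
    exact bwd (m ≫ n) eW cW e' c' htriW₁ htriW₂ h1 h2 hφ
  · rintro Ad e c h1 h2 hφ
    exact ⟨(λ_ Ad).symm ≪≫ whiskerRightIso (asIso eW).symm Ad ≪≫ α_ V W Ad ≪≫
      whiskerLeftIso V (asIso ((ρ_ A).inv ≫ (A ◁ c) ≫ (α_ A A Ad).inv ≫ ((m ≫ n) ▷ Ad))).symm⟩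
  · rintro Av e' c' h1 h2 hφ
    exact ⟨(ρ_ Av).symm ≪≫ whiskerLeftIso Av (asIso cW) ≪≫ (α_ Av W V).symm ≪≫
      whiskerRightIso (asIso ((λ_ A).inv ≫ (c' ▷ A) ≫ (α_ Av A A).hom ≫ (Av ◁ (m ≫ n)))).symm V⟩
end

section
/- Let (F, J) : C → D be a monoidal functor between monoidal categories, with structure isomorphisms J_{C,C'} : F(C) ⊗ F(C') → F(C ⊗ C'). Let (A, m, u) be an algebra object in C with A left dualizable, and let (B, m_B, u_B) be the induced algebra in D with B = F(A), m_B = F(m) ∘ J_{A,A}, u_B = F(u) ∘ J_0 (where J_0 : 1_D → F(1_C)). If (W, n) is a Frobenius structure on A, then (F(W), F(n)) is a Frobenius structure on B; that is, the map φ_B : B → F(W) ⊗ B^∨ defined via the coevaluation of B and n_B ∘ m_B is invertible. -/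
open CategoryTheory MonoidalCategory

/-- Let `(F, J)` be a monoidal functor `C ⥤ D`, `(A, m, u)` a left-dualizable algebra object
in `C` (dual `Ad`, evaluation `e`, coevaluation `c`), and `(B = F(A), m_B, u_B)` the induced
algebra in `D`.  Monoidal functors preserve duals, so `B` is left dualizable with dual
`F(Ad)`, evaluation `e_B = ε⁻¹ ∘ F(e) ∘ J` and coevaluation `c_B = J⁻¹ ∘ F(c) ∘ ε`.  If
`(W, n)` is a Frobenius structure on `A` (i.e. `φ_A` is invertible), then `(F(W), F(n))` is
a Frobenius structure on `B`: the map `φ_B : B ⟶ F(W) ⊗ B^∨` defined via the coevaluation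
of `B` and `n_B ∘ m_B` is invertible. -/
theorem stmt_8 {C D : Type*} [Category C] [Category D]
    [MonoidalCategory C] [MonoidalCategory D]
    (F : C ⥤ D) [F.Monoidal]
    (A Ad W : C) (m : A ⊗ A ⟶ A) (u : 𝟙_ C ⟶ A)
    (hassoc : (α_ A A A).inv ≫ (m ▷ A) ≫ m = (A ◁ m) ≫ m)
    (hunitl : (u ▷ A) ≫ m = (λ_ A).hom)
    (hunitr : (A ◁ u) ≫ m = (ρ_ A).hom)
    (e : Ad ⊗ A ⟶ 𝟙_ C) (c : 𝟙_ C ⟶ A ⊗ Ad)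
    (htri₁ : (λ_ A).inv ≫ (c ▷ A) ≫ (α_ A Ad A).hom ≫ (A ◁ e) ≫ (ρ_ A).hom = 𝟙 A)
    (htri₂ : (ρ_ Ad).inv ≫ (Ad ◁ c) ≫ (α_ Ad A Ad).inv ≫ (e ▷ Ad) ≫ (λ_ Ad).hom = 𝟙 Ad)
    (n : A ⟶ W)
    (hφ : IsIso ((ρ_ A).inv ≫ (A ◁ c) ≫ (α_ A A Ad).inv ≫ ((m ≫ n) ▷ Ad))) :
    let B : D := F.obj A
    let mB : B ⊗ B ⟶ B := Functor.LaxMonoidal.μ F A A ≫ F.map m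
    let nB : B ⟶ F.obj W := F.map n
    let cB : 𝟙_ D ⟶ B ⊗ F.obj Ad :=
      Functor.LaxMonoidal.ε F ≫ F.map c ≫ inv (Functor.LaxMonoidal.μ F A Ad)
    IsIso ((ρ_ B).inv ≫ (B ◁ cB) ≫ (α_ B B (F.obj Ad)).inv ≫
      ((mB ≫ nB) ▷ F.obj Ad)) := by
  intro B mB nB cB
  have h : (ρ_ B).inv ≫ (B ◁ cB) ≫ (α_ B B (F.obj Ad)).inv ≫ ((mB ≫ nB) ▷ F.obj Ad)
      = F.map ((ρ_ A).inv ≫ (A ◁ c) ≫ (α_ A A Ad).inv ≫ ((m ≫ n) ▷ Ad)) ≫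
        inv (Functor.LaxMonoidal.μ F W Ad) := by
    simp [B, mB, nB, cB, ← Functor.LaxMonoidal.μ_natural_left F,
      ← Functor.LaxMonoidal.μ_natural_right F]
  rw [h]
  infer_instance
end

section
/- Let k be a field, S = k × k with idempotents e₁ = (1,0), e₂ = (0,1), and let A be the 4-dimensional k-algebra with basis {e₁, e₂, a, b}, orthogonal idempotents e₁ + e₂ = 1, a·e₁ = a = e₂·a, b·e₂ = b = e₁·b, and ab = ba = a² = b² = 0, regarded as an (S,S)-bimodule via the inclusion S ⊆ A. Then every (S,S)-bimodule map n : A → S satisfies n(a) = n(b) = 0, and consequently for every such n the associated bilinear pairing κ(x,y) = n(xy) is degenerate (for instance κ(a, y) = 0 for all y ∈ A). In particular, the algebra object A in the category of (S,S)-bimodules admits no classical Frobenius structure, i.e. no (S,S)-bimodule map n : A → S for which y ↦ (x ↦ n(yx)) is an isomorphism A → Hom_{mod-S}(A, S). -/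
/-- Let `S = k × k` with idempotents `e₁ = (1,0)`, `e₂ = (0,1)`, and `A` the 4-dimensional
`k`-algebra with basis `{e₁, e₂, a, b}` and the usual relations, regarded as an
`(S,S)`-bimodule via the inclusion `S ⊆ A`, `ι(x,y) = x•e₁ + y•e₂`.  Then every
`(S,S)`-bimodule map `n : A → S` satisfies `n(a) = n(b) = 0`; consequently the pairing
`κ(x,y) = n(xy)` is degenerate (e.g. `κ(a,y) = 0` for all `y`), and the map
`y ↦ (x ↦ n(yx))` is not injective, so `A` admits no classical Frobenius structure as an
algebra object in `(S,S)`-bimodules. -/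
theorem stmt_13 {k A : Type*} [Field k] [Ring A] [Algebra k A]
    (e₁ e₂ a b : A)
    (hspan : ∀ x : A, ∃ c₁ c₂ c₃ c₄ : k, x = c₁ • e₁ + c₂ • e₂ + c₃ • a + c₄ • b)
    (hindep : ∀ c₁ c₂ c₃ c₄ : k, c₁ • e₁ + c₂ • e₂ + c₃ • a + c₄ • b = 0 →
      c₁ = 0 ∧ c₂ = 0 ∧ c₃ = 0 ∧ c₄ = 0)
    (he₁ : e₁ * e₁ = e₁) (he₂ : e₂ * e₂ = e₂) (he₁₂ : e₁ * e₂ = 0) (he₂₁ : e₂ * e₁ = 0)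
    (hsum : e₁ + e₂ = 1)
    (hae₁ : a * e₁ = a) (he₂a : e₂ * a = a) (hbe₂ : b * e₂ = b) (he₁b : e₁ * b = b)
    (hab : a * b = 0) (hba : b * a = 0) (haa : a * a = 0) (hbb : b * b = 0)
    (ι : k × k → A) (hι : ∀ s : k × k, ι s = s.1 • e₁ + s.2 • e₂)
    (n : A → k × k)
    (hadd : ∀ x y : A, n (x + y) = n x + n y)
    (hleft : ∀ (s : k × k) (x : A), n (ι s * x) = s * n x)
    (hright : ∀ (x : A) (s : k × k), n (x * ι s) = n x * s) :
    n a = 0 ∧ n b = 0 ∧ (∀ y : A, n (a * y) = 0) ∧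
    ¬ Function.Injective (fun y : A => fun x : A => n (y * x)) := by
  have n0 : n 0 = 0 := by
    have h := hadd 0 0
    simpa using h.symm
  have hιe₂ : ι (0, 1) = e₂ := by simp [hι]
  have hιe₁ : ι (1, 0) = e₁ := by simp [hι]
  have hae₂ : a * e₂ = 0 := by
    have : a * (e₁ + e₂) = a := by rw [hsum, mul_one]
    rw [mul_add, hae₁] at this
    linear_combination (norm := noncomm_ring) this
  have hιc : ∀ c : k, ι (c, c) = c • (1 : A) := by
    intro c; rw [hι]; simp [← smul_add, hsum]
  have na : n a = 0 := by
    have h1 : a = ι (0, 1) * (a * ι (1, 0)) := by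
      rw [hιe₁, hιe₂, hae₁, he₂a]
    have key : n a = (0, 1) * (n a * (1, 0)) := by
      conv_lhs => rw [h1, hleft, hright]
    rw [key]
    ext <;> simp
  have nb : n b = 0 := by
    have h1 : b = ι (1, 0) * (b * ι (0, 1)) := by
      rw [hιe₁, hιe₂, hbe₂, he₁b]
    have key : n b = (1, 0) * (n b * (0, 1)) := by
      conv_lhs => rw [h1, hleft, hright]
    rw [key]
    ext <;> simp
  have nay : ∀ y : A, n (a * y) = 0 := by
    intro y
    obtain ⟨c₁, c₂, c₃, c₄, hy⟩ := hspan y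
    have hay : a * y = ι (c₁, c₁) * a := by
      rw [hy, hιc]
      simp [mul_add, mul_smul_comm, hae₁, hae₂, haa, hab, smul_mul_assoc]
    rw [hay, hleft, na, mul_zero]
  refine ⟨na, nb, nay, ?_⟩
  intro hinj
  have ha0 : a = 0 := by
    apply hinj
    funext x
    simp only
    rw [nay, zero_mul, n0]
  have := hindep 0 0 1 0 (by simp [ha0])
  exact one_ne_zero this.2.2.1
end
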